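/- arXiv:2510.07269 — 3 statements merged into one kernel-verified Lean document; each statement's English description precedes it below -/
import Mathlib

section
/- Let R be a commutative ring, let H_A : Matrix a₀ a₁ R, H_B : Matrix b₀ b₁ R, H_C : Matrix c₀ c₁ R be matrices over finite index types, and fix q : c₀. Let e_q denote the column vector in R^{c₀} with a 1 in position q and 0 elsewhere, regarded as a matrix with a one-element column index. Define ∂₁^{AB} = [H_A⊗I_{b₀} ∣ I_{a₀}⊗H_B], ∂₁^{ABC} = [H_A⊗I_{b₀}⊗I_{c₀} ∣ I_{a₀}⊗H_B⊗I_{c₀} ∣ I_{a₀}⊗I_{b₀}⊗H_C], γ₀ = I_{a₀×b₀}⊗e_q, and γ₁ the block matrix with row index (a₁×b₀×c₀) ⊕ (a₀×b₁×c₀) ⊕ (a₀×b₀×c₁) and column index (a₁×b₀) ⊕ (a₀×b₁) whose (1,1) block is I_{a₁×b₀}⊗e_q, whose (2,2) block is I_{a₀×b₁}⊗e_q, and whose remaining blocks are zero. Then ∂₁^{ABC} * γ₁ = γ₀ * ∂₁^{AB}. -/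
open Matrix Kronecker

/-!
Multiplying out the blocks, the `HC` column of `∂₁^{ABC}` only meets zero blocks of `γ₁`, and after
regrouping the triple Kronecker products each remaining block is an instance of the mixed-product
identity `(M ⊗ I) (I ⊗ e_q) = M ⊗ e_q = (I ⊗ e_q) M`.
-/

namespace Matrix

variable {R m n c u m' n' : Type*} [CommRing R]

theorem reindex_prodUnique_kronecker_one [Unique u] [DecidableEq u] (M : Matrix m n R) :
    reindex (Equiv.prodUnique m u) (Equiv.prodUnique n u) (M ⊗ₖ (1 : Matrix u u R)) = M := by
  ext i j
  simp

theorem reindex_kronecker_one_mul_reindex_one_kronecker [Fintype m] [Fintype n] [Fintype c]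
    [Fintype n'] [DecidableEq m] [DecidableEq n] [DecidableEq c] [Unique u] [DecidableEq u]
    (eₘ : m × c ≃ m') (eₙ : n × c ≃ n') (M : Matrix m n R) (v : Matrix c u R) :
    reindex eₘ eₙ (M ⊗ₖ (1 : Matrix c c R)) * reindex eₙ (Equiv.prodUnique n u) (1 ⊗ₖ v) =
      reindex eₘ (Equiv.prodUnique m u) (1 ⊗ₖ v) * M := by
  calc _ = reindex eₘ (Equiv.prodUnique n u) (M ⊗ₖ v) := by
        rw [reindex_apply, reindex_apply, submatrix_mul_equiv, ← mul_kronecker_mul, Matrix.mul_one,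
          Matrix.one_mul, reindex_apply]
    _ = reindex eₘ (Equiv.prodUnique m u) (1 ⊗ₖ v) *
          reindex (Equiv.prodUnique m u) (Equiv.prodUnique n u) (M ⊗ₖ (1 : Matrix u u R)) := by
        rw [reindex_apply, reindex_apply, reindex_apply, submatrix_mul_equiv, ← mul_kronecker_mul,
          Matrix.mul_one, Matrix.one_mul]
    _ = _ := by rw [reindex_prodUnique_kronecker_one]

end Matrix

theorem inclusion_chain_map_degree_one_general {R : Type*} [CommRing R]
    {a₀ a₁ b₀ b₁ c₀ c₁ : Type*}
    [Fintype a₀] [Fintype a₁] [Fintype b₀] [Fintype b₁] [Fintype c₀] [Fintype c₁]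
    [DecidableEq a₀] [DecidableEq a₁] [DecidableEq b₀] [DecidableEq b₁]
    [DecidableEq c₀]
    (HA : Matrix a₀ a₁ R) (HB : Matrix b₀ b₁ R) (HC : Matrix c₀ c₁ R) (q : c₀) :
    -- e_q : the standard basis column vector at position q
    let e : Matrix c₀ Unit R := Matrix.of fun k _ => if k = q then 1 else 0
    -- γ₀ = I_{a₀×b₀} ⊗ e_q
    let γ₀ : Matrix (a₀ × b₀ × c₀) (a₀ × b₀) R :=
      Matrix.reindex (Equiv.prodAssoc a₀ b₀ c₀) (Equiv.prodUnique (a₀ × b₀) Unit)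
        ((1 : Matrix (a₀ × b₀) (a₀ × b₀) R) ⊗ₖ e)
    -- γ₁: (1,1) block I_{a₁×b₀}⊗e_q, (2,2) block I_{a₀×b₁}⊗e_q, rest zero
    let γ₁ : Matrix ((a₁ × b₀ × c₀) ⊕ (a₀ × b₁ × c₀) ⊕ (a₀ × b₀ × c₁))
        ((a₁ × b₀) ⊕ (a₀ × b₁)) R :=
      fromBlocks
        (Matrix.reindex (Equiv.prodAssoc a₁ b₀ c₀) (Equiv.prodUnique (a₁ × b₀) Unit)
          ((1 : Matrix (a₁ × b₀) (a₁ × b₀) R) ⊗ₖ e))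
        0 0
        (fromRows
          (Matrix.reindex (Equiv.prodAssoc a₀ b₁ c₀) (Equiv.prodUnique (a₀ × b₁) Unit)
            ((1 : Matrix (a₀ × b₁) (a₀ × b₁) R) ⊗ₖ e))
          0)
    -- ∂₁^{ABC} * γ₁ = γ₀ * ∂₁^{AB}
    (fromCols (HA ⊗ₖ ((1 : Matrix b₀ b₀ R) ⊗ₖ (1 : Matrix c₀ c₀ R)))
      (fromCols ((1 : Matrix a₀ a₀ R) ⊗ₖ (HB ⊗ₖ (1 : Matrix c₀ c₀ R)))
        ((1 : Matrix a₀ a₀ R) ⊗ₖ ((1 : Matrix b₀ b₀ R) ⊗ₖ HC)))) * γ₁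
    = γ₀ * fromCols (HA ⊗ₖ (1 : Matrix b₀ b₀ R)) ((1 : Matrix a₀ a₀ R) ⊗ₖ HB) := by
  intro e γ₀ γ₁
  rw [← kronecker_assoc HA, ← kronecker_assoc (1 : Matrix a₀ a₀ R),
    fromCols_mul_fromBlocks, fromCols_mul_fromRows, mul_fromCols]
  simp only [γ₀, Matrix.mul_zero, add_zero, zero_add,
    reindex_kronecker_one_mul_reindex_one_kronecker]

/-- Degree-0/degree-1 chain map identity for the inclusion of a 2D lifted product code
into the 3D lifted product code: `∂₁^{ABC} * γ₁ = γ₀ * ∂₁^{AB}`, where `γ₀ = I_{a₀×b₀}⊗e_q`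
and `γ₁` has diagonal blocks `I_{a₁×b₀}⊗e_q`, `I_{a₀×b₁}⊗e_q` and zero elsewhere. -/
theorem inclusion_chain_map_degree_one {R : Type*} [CommRing R]
    {a₀ a₁ b₀ b₁ c₀ c₁ : Type*}
    [Fintype a₀] [Fintype a₁] [Fintype b₀] [Fintype b₁] [Fintype c₀] [Fintype c₁]
    [DecidableEq a₀] [DecidableEq a₁] [DecidableEq b₀] [DecidableEq b₁]
    [DecidableEq c₀] [DecidableEq c₁]
    (HA : Matrix a₀ a₁ R) (HB : Matrix b₀ b₁ R) (HC : Matrix c₀ c₁ R) (q : c₀) :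
    -- e_q : the standard basis column vector at position q
    let e : Matrix c₀ Unit R := Matrix.of fun k _ => if k = q then 1 else 0
    -- γ₀ = I_{a₀×b₀} ⊗ e_q
    let γ₀ : Matrix (a₀ × b₀ × c₀) (a₀ × b₀) R :=
      Matrix.reindex (Equiv.prodAssoc a₀ b₀ c₀) (Equiv.prodUnique (a₀ × b₀) Unit)
        ((1 : Matrix (a₀ × b₀) (a₀ × b₀) R) ⊗ₖ e)
    -- γ₁: (1,1) block I_{a₁×b₀}⊗e_q, (2,2) block I_{a₀×b₁}⊗e_q, rest zero
    let γ₁ : Matrix ((a₁ × b₀ × c₀) ⊕ (a₀ × b₁ × c₀) ⊕ (a₀ × b₀ × c₁))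
        ((a₁ × b₀) ⊕ (a₀ × b₁)) R :=
      fromBlocks
        (Matrix.reindex (Equiv.prodAssoc a₁ b₀ c₀) (Equiv.prodUnique (a₁ × b₀) Unit)
          ((1 : Matrix (a₁ × b₀) (a₁ × b₀) R) ⊗ₖ e))
        0 0
        (fromRows
          (Matrix.reindex (Equiv.prodAssoc a₀ b₁ c₀) (Equiv.prodUnique (a₀ × b₁) Unit)
            ((1 : Matrix (a₀ × b₁) (a₀ × b₁) R) ⊗ₖ e))
          0)
    -- ∂₁^{ABC} * γ₁ = γ₀ * ∂₁^{AB}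
    (fromCols (HA ⊗ₖ ((1 : Matrix b₀ b₀ R) ⊗ₖ (1 : Matrix c₀ c₀ R)))
      (fromCols ((1 : Matrix a₀ a₀ R) ⊗ₖ (HB ⊗ₖ (1 : Matrix c₀ c₀ R)))
        ((1 : Matrix a₀ a₀ R) ⊗ₖ ((1 : Matrix b₀ b₀ R) ⊗ₖ HC)))) * γ₁
    = γ₀ * fromCols (HA ⊗ₖ (1 : Matrix b₀ b₀ R)) ((1 : Matrix a₀ a₀ R) ⊗ₖ HB) :=
  inclusion_chain_map_degree_one_general HA HB HC q
end

section
/- Let R be the quotient ring (ZMod 2)[x, y] / (x³ − 1, y⁵ − 1), i.e. the quotient of the polynomial ring in two variables over ZMod 2 by the ideal generated by x³ − 1 and y⁵ − 1. Let a = x + y², b = 1 + xy², and c = x + xy³ as elements of R. Then c lies in the ideal of R generated by a and b; explicitly, c = 1·a + (x² + xy³)·b in R. -/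
open MvPolynomial

/-- For the `[[45,3,4]]` bivariate tricycle code over
`R = 𝔽₂[x,y]/(x³−1, y⁵−1)` with `a = x + y²`, `b = 1 + xy²`, `c = x + xy³`,
the polynomial `c` lies in the ideal generated by `a` and `b`; explicitly
`c = 1·a + (x² + xy³)·b`. -/
theorem tricycle_45_c_mem_ideal_ab :
    let I : Ideal (MvPolynomial (Fin 2) (ZMod 2)) :=
      Ideal.span {(X 0 : MvPolynomial (Fin 2) (ZMod 2)) ^ 3 - 1, (X 1) ^ 5 - 1}
    let x : MvPolynomial (Fin 2) (ZMod 2) ⧸ I := Ideal.Quotient.mk I (X 0)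
    let y : MvPolynomial (Fin 2) (ZMod 2) ⧸ I := Ideal.Quotient.mk I (X 1)
    let a := x + y ^ 2
    let b := 1 + x * y ^ 2
    let c := x + x * y ^ 3
    c ∈ Ideal.span {a, b} ∧ c = 1 * a + (x ^ 2 + x * y ^ 3) * b := by
  intro I x y a b c
  have hx : x ^ 3 = 1 := by
    have : Ideal.Quotient.mk I ((X 0 : MvPolynomial (Fin 2) (ZMod 2)) ^ 3 - 1) = 0 := by
      rw [Ideal.Quotient.eq_zero_iff_mem]
      exact Ideal.subset_span (Or.inl rfl)
    simpa [sub_eq_zero] using this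
  have hy : y ^ 5 = 1 := by
    have : Ideal.Quotient.mk I ((X 1 : MvPolynomial (Fin 2) (ZMod 2)) ^ 5 - 1) = 0 := by
      rw [Ideal.Quotient.eq_zero_iff_mem]
      exact Ideal.subset_span (Or.inr rfl)
    simpa [sub_eq_zero] using this
  have heq : c = 1 * a + (x ^ 2 + x * y ^ 3) * b := by
    show x + x * y ^ 3 = 1 * (x + y ^ 2) + (x ^ 2 + x * y ^ 3) * (1 + x * y ^ 2)
    have h2 : (2 : MvPolynomial (Fin 2) (ZMod 2) ⧸ I) = 0 := by
      have h := map_ofNat (algebraMap (ZMod 2) (MvPolynomial (Fin 2) (ZMod 2) ⧸ I)) 2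
      rw [← h, show ((OfNat.ofNat 2 : ZMod 2)) = 0 from rfl, map_zero]
    linear_combination (-(y ^ 2)) * hx + (-(x ^ 2)) * hy -
      (x ^ 2 + y ^ 2) * h2
  refine ⟨?_, heq⟩
  rw [heq]
  exact Ideal.add_mem _
    (Ideal.mul_mem_left _ _ (Ideal.subset_span (Or.inl rfl)))
    (Ideal.mul_mem_left _ _ (Ideal.subset_span (Or.inr rfl)))
end

section
/- Let R be the quotient ring (ZMod 2)[x, y] / (x³ − 1, y⁹ − 1), i.e. the quotient of the polynomial ring in two variables over ZMod 2 by the ideal generated by x³ − 1 and y⁹ − 1. Let a = xy³ + x²y, b = 1 + xy⁸, and c = x²y⁴ + x²y⁶ as elements of R. Then c lies in the ideal of R generated by a and b; explicitly, c = (y³ + y⁴)·a + (xy⁶ + xy⁷)·b in R. -/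
open MvPolynomial

/-- For the `[[81,3,5]]` bivariate tricycle code over
`R = 𝔽₂[x,y]/(x³−1, y⁹−1)` with `a = xy³ + x²y`, `b = 1 + xy⁸`, `c = x²y⁴ + x²y⁶`,
the polynomial `c` lies in the ideal generated by `a` and `b`; explicitly
`c = (y³ + y⁴)·a + (xy⁶ + xy⁷)·b`. -/
theorem tricycle_81_c_mem_ideal_ab :
    let I : Ideal (MvPolynomial (Fin 2) (ZMod 2)) :=
      Ideal.span {(X 0 : MvPolynomial (Fin 2) (ZMod 2)) ^ 3 - 1, (X 1) ^ 9 - 1}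
    let x : MvPolynomial (Fin 2) (ZMod 2) ⧸ I := Ideal.Quotient.mk I (X 0)
    let y : MvPolynomial (Fin 2) (ZMod 2) ⧸ I := Ideal.Quotient.mk I (X 1)
    let a := x * y ^ 3 + x ^ 2 * y
    let b := 1 + x * y ^ 8
    let c := x ^ 2 * y ^ 4 + x ^ 2 * y ^ 6
    c ∈ Ideal.span {a, b} ∧ c = (y ^ 3 + y ^ 4) * a + (x * y ^ 6 + x * y ^ 7) * b := by
  intro I x y a b c
  have hy : y ^ 9 = 1 := by
    have h0 : (Ideal.Quotient.mk I) ((X 1 : MvPolynomial (Fin 2) (ZMod 2)) ^ 9 - 1) = 0 :=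
      Ideal.Quotient.eq_zero_iff_mem.mpr (Ideal.subset_span (by simp))
    have := sub_eq_zero.mp (by simpa using h0)
    simpa [y] using this
  have heq : c = (y ^ 3 + y ^ 4) * a + (x * y ^ 6 + x * y ^ 7) * b := by
    simp only [a, b, c]
    have h2 : (2 : MvPolynomial (Fin 2) (ZMod 2) ⧸ I) = 0 := by
      rw [← map_ofNat (algebraMap (ZMod 2) (MvPolynomial (Fin 2) (ZMod 2) ⧸ I)) 2]
      rw [show ((2:ZMod 2) = 0) from rfl, map_zero]
    linear_combination (x ^ 2 * y ^ 5 + x ^ 2 * y ^ 6) * hy +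
      (-(x * y ^ 6) - x * y ^ 7 + x ^ 2 * y ^ 6 - x ^ 2 * y ^ 14 - x ^ 2 * y ^ 15) * h2
  refine ⟨heq ▸ ?_, heq⟩
  exact Ideal.add_mem _
    (Ideal.mul_mem_left _ _ (Ideal.subset_span (by simp)))
    (Ideal.mul_mem_left _ _ (Ideal.subset_span (by simp)))
end
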